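/- Let x̂ ≥ 0 with d_i(x̂) > 0 for all i be a fixed point of the EM operator, i.e. f_j(x̂) = 1 for every j with x̂_j > 0. Then for every x > 0 one has I(x̂, x) − I(x̂, P(x)) ≥ I_A^b(x) − I_A^b(x̂). -/

import Mathlib

open Finset Filter Topology

noncomputable def dd {M N : ℕ} (A : Fin M → Fin N → ℝ) (x : Fin N → ℝ) (i : Fin M) : ℝ :=
  ∑ j, A i j * x j

noncomputable def ff {M N : ℕ} (A : Fin M → Fin N → ℝ) (b : Fin M → ℝ) (x : Fin N → ℝ) (j : Fin N) : ℝ :=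
  ∑ i, A i j * b i / dd A x i

noncomputable def EMop {M N : ℕ} (A : Fin M → Fin N → ℝ) (b : Fin M → ℝ) (x : Fin N → ℝ) : Fin N → ℝ :=
  fun j => x j * ff A b x j

noncomputable def KL {N : ℕ} (u v : Fin N → ℝ) : ℝ :=
  (∑ j, u j * Real.log (u j / v j)) - ∑ j, (u j - v j)

noncomputable def IAb {M N : ℕ} (A : Fin M → Fin N → ℝ) (b : Fin M → ℝ) (x : Fin N → ℝ) : ℝ :=
  (∑ i, b i * Real.log (b i / dd A x i)) - ∑ i, (b i - dd A x i)

noncomputable def finSup0 {ι : Type*} (s : Finset ι) (g : ι → ℝ) : ℝ :=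
  if h : s.Nonempty then s.sup' h g else 0

noncomputable def finInf0 {ι : Type*} (s : Finset ι) (g : ι → ℝ) : ℝ :=
  if h : s.Nonempty then s.inf' h g else 0

/-!
Both sides differ by the same linear terms from the two log-sums `∑ⱼ x̂ⱼ log fⱼ(x)` and
`∑ᵢ bᵢ log (dᵢ(x̂)/dᵢ(x))`, because `P` and a fixed point both have total mass `∑ᵢ bᵢ` and
`A` preserves total mass. Writing `bᵢ = ∑ⱼ x̂ⱼ aᵢⱼ bᵢ / dᵢ(x̂)`, the second log-sum becomes
`∑ⱼ x̂ⱼ ∑ᵢ wᵢⱼ log (dᵢ(x̂)/dᵢ(x))` with weights `wᵢⱼ = aᵢⱼ bᵢ / dᵢ(x̂)`, which sum to `fⱼ(x̂) = 1`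
over `i` whenever `x̂ⱼ > 0`; concavity of `log` bounds the inner sum by
`log ∑ᵢ wᵢⱼ dᵢ(x̂)/dᵢ(x) = log fⱼ(x)`.
-/

theorem KL_sub_KL {N : ℕ} (u v w : Fin N → ℝ) (hv : ∀ j, 0 < v j) (hw : ∀ j, 0 < w j) :
    KL u v - KL u w = ∑ j, u j * Real.log (w j / v j) + ∑ j, v j - ∑ j, w j := by
  have hlog : ∀ j, u j * Real.log (u j / v j) - u j * Real.log (u j / w j)
      = u j * Real.log (w j / v j) := by
    intro j
    rcases eq_or_ne (u j) 0 with hu | hu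
    · simp [hu]
    · rw [Real.log_div hu (hv j).ne', Real.log_div hu (hw j).ne',
        Real.log_div (hw j).ne' (hv j).ne']
      ring
  simp only [KL, sum_sub_distrib, ← hlog]
  ring

section EM

variable {M N : ℕ} {A : Fin M → Fin N → ℝ} {b : Fin M → ℝ}

theorem IAb_eq_KL (x : Fin N → ℝ) : IAb A b x = KL b (dd A x) := rfl

theorem dd_pos (hA : ∀ i j, 0 ≤ A i j) {x : Fin N → ℝ} (hx : ∀ j, 0 < x j) {i : Fin M}
    (hrow : ∃ j, 0 < A i j) : 0 < dd A x i := by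
  obtain ⟨j, hj⟩ := hrow
  exact sum_pos' (fun k _ => mul_nonneg (hA i k) (hx k).le)
    ⟨j, mem_univ j, mul_pos hj (hx j)⟩

theorem sum_dd (hcol : ∀ j, ∑ i, A i j = 1) (x : Fin N → ℝ) :
    ∑ i, dd A x i = ∑ j, x j := by
  simp only [dd]
  rw [sum_comm]
  simp only [← sum_mul, hcol, one_mul]

theorem ff_pos (hA : ∀ i j, 0 ≤ A i j) (hcol : ∀ j, ∑ i, A i j = 1) (hb : ∀ i, 0 < b i)
    {x : Fin N → ℝ} (hdx : ∀ i, 0 < dd A x i) (j : Fin N) : 0 < ff A b x j := by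
  obtain ⟨i, -, hi⟩ := exists_ne_zero_of_sum_ne_zero
    (by rw [hcol j]; exact one_ne_zero : ∑ i, A i j ≠ 0)
  exact sum_pos'
    (fun k _ => div_nonneg (mul_nonneg (hA k j) (hb k).le) (hdx k).le)
    ⟨i, mem_univ i, div_pos (mul_pos ((hA i j).lt_of_ne' hi) (hb i)) (hdx i)⟩

theorem sum_mul_eq_sum_mul_sum_div_dd {y : Fin N → ℝ} (hy : ∀ i, dd A y i ≠ 0)
    (g : Fin M → ℝ) :
    ∑ i, b i * g i = ∑ j, y j * ∑ i, A i j * b i / dd A y i * g i := by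
  simp only [mul_sum]
  rw [sum_comm]
  refine sum_congr rfl fun i _ => ?_
  calc b i * g i = dd A y i * (b i / dd A y i * g i) := by field_simp [hy i]
    _ = _ := by rw [dd, sum_mul]; exact sum_congr rfl fun j _ => by ring

theorem sum_mul_ff {y : Fin N → ℝ} (hy : ∀ i, dd A y i ≠ 0) :
    ∑ j, y j * ff A b y j = ∑ i, b i := by
  simpa [ff] using (sum_mul_eq_sum_mul_sum_div_dd (b := b) hy 1).symm

theorem sum_EMop {x : Fin N → ℝ} (hdx : ∀ i, dd A x i ≠ 0) :
    ∑ j, EMop A b x j = ∑ i, b i :=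
  sum_mul_ff hdx

theorem sum_eq_of_ff_eq_one {xh : Fin N → ℝ} (hd : ∀ i, dd A xh i ≠ 0)
    (hfix : ∀ j, 0 < xh j → ff A b xh j = 1) (hxh : ∀ j, 0 ≤ xh j) :
    ∑ j, xh j = ∑ i, b i := by
  rw [← sum_mul_ff hd]
  refine sum_congr rfl fun j _ => ?_
  rcases (hxh j).eq_or_lt with h | h
  · simp [← h]
  · rw [hfix j h, mul_one]

theorem sum_mul_log_dd_div_le_sum_mul_log_ff (hA : ∀ i j, 0 ≤ A i j) (hb : ∀ i, 0 < b i)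
    {xh x : Fin N → ℝ} (hxh : ∀ j, 0 ≤ xh j) (hd : ∀ i, 0 < dd A xh i)
    (hfix : ∀ j, 0 < xh j → ff A b xh j = 1) (hdx : ∀ i, 0 < dd A x i) :
    ∑ i, b i * Real.log (dd A xh i / dd A x i) ≤ ∑ j, xh j * Real.log (ff A b x j) := by
  rw [sum_mul_eq_sum_mul_sum_div_dd (fun i => (hd i).ne')]
  refine sum_le_sum fun j _ => ?_
  rcases (hxh j).eq_or_lt with h | h
  · simp [← h]
  have hmean : ∑ i, A i j * b i / dd A xh i * (dd A xh i / dd A x i) = ff A b x j :=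
    sum_congr rfl fun i _ => by field_simp [(hd i).ne']
  have hjensen := strictConcaveOn_log_Ioi.concaveOn.le_map_sum
    (t := univ) (w := fun i => A i j * b i / dd A xh i)
    (p := fun i => dd A xh i / dd A x i)
    (fun i _ => div_nonneg (mul_nonneg (hA i j) (hb i).le) (hd i).le) (hfix j h)
    (fun i _ => div_pos (hd i) (hdx i))
  simp only [smul_eq_mul, hmean] at hjensen
  exact mul_le_mul_of_nonneg_left hjensen h.le

end EM

theorem stmt_7_general
    (M N : ℕ)
    (A : Fin M → Fin N → ℝ) (b : Fin M → ℝ)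
    (hA : ∀ i j, 0 ≤ A i j)
    (hcol : ∀ j, ∑ i, A i j = 1)
    (hrow : ∀ i, ∃ j, 0 < A i j)
    (hb : ∀ i, 0 < b i)
    (xh : Fin N → ℝ) (hxh : ∀ j, 0 ≤ xh j)
    (hd : ∀ i, 0 < dd A xh i)
    (hfix : ∀ j, 0 < xh j → ff A b xh j = 1) :
    ∀ x : Fin N → ℝ, (∀ j, 0 < x j) →
      KL xh x - KL xh (EMop A b x) ≥ IAb A b x - IAb A b xh := by
  intro x hx
  have hdx : ∀ i, 0 < dd A x i := fun i => dd_pos hA hx (hrow i)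
  have hP : ∀ j, 0 < EMop A b x j := fun j => mul_pos (hx j) (ff_pos hA hcol hb hdx j)
  have hPx : ∀ j, EMop A b x j / x j = ff A b x j := fun j =>
    mul_div_cancel_left₀ _ (hx j).ne'
  rw [KL_sub_KL xh x _ hx hP, IAb_eq_KL, IAb_eq_KL, KL_sub_KL b _ _ hdx hd,
    sum_EMop fun i => (hdx i).ne', sum_dd hcol, sum_dd hcol,
    sum_eq_of_ff_eq_one (fun i => (hd i).ne') hfix hxh]
  simp only [hPx]
  linarith [sum_mul_log_dd_div_le_sum_mul_log_ff hA hb hxh hd hfix hdx]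

theorem stmt_7
    (M N : ℕ) (hM : 0 < M) (hN : 0 < N)
    (A : Fin M → Fin N → ℝ) (b : Fin M → ℝ)
    (hA : ∀ i j, 0 ≤ A i j)
    (hcol : ∀ j, ∑ i, A i j = 1)
    (hrow : ∀ i, ∃ j, 0 < A i j)
    (hb : ∀ i, 0 < b i)
    (xh : Fin N → ℝ) (hxh : ∀ j, 0 ≤ xh j)
    (hd : ∀ i, 0 < dd A xh i)
    (hfix : ∀ j, 0 < xh j → ff A b xh j = 1) :
    ∀ x : Fin N → ℝ, (∀ j, 0 < x j) →
      KL xh x - KL xh (EMop A b x) ≥ IAb A b x - IAb A b xh :=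
  stmt_7_general M N A b hA hcol hrow hb xh hxh hd hfix
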